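/- arXiv:2503.11600 — 10 statements merged into one kernel-verified Lean document; each statement's English description precedes it below -/
import Mathlib

section
/- Let β be a real number with 0 < β ≤ 1/5, and let n, t be natural numbers with t ≥ 1 and (t : ℝ) ≥ (4β/(1−4β)) · n. Set T = n + t. Then Σ_{k = ⌈t/2⌉}^{T} C(T, k) · β^k · (1−β)^{T−k} ≤ exp(−t/12). -/
open Finset Real

/-- Chernoff-type bound at the core of Lemma 1 (`th:line-time`): the probability
that a `Binomial(T, β)` random variable (with `T = n + t`) is at least `t/2`
is at most `exp (-t/12)`, provided `0 < β ≤ 1/5` and `t ≥ (4β/(1-4β)) n`. -/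
theorem stmt_1 (β : ℝ) (hβ0 : 0 < β) (hβ : β ≤ 1 / 5)
    (n t : ℕ) (ht1 : 1 ≤ t) (ht : (t : ℝ) ≥ (4 * β / (1 - 4 * β)) * n)
    (T : ℕ) (hT : T = n + t) :
    ∑ k ∈ Finset.Icc ⌈(t : ℝ) / 2⌉₊ T,
      (T.choose k : ℝ) * β ^ k * (1 - β) ^ (T - k) ≤ Real.exp (-(t : ℝ) / 12) := by
  set m := ⌈(t : ℝ) / 2⌉₊ with hm
  have h1β : 0 ≤ 1 - β := by linarith
  have h2β : 0 ≤ 2 * β := by linarith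
  -- Step 1: tail sum ≤ (1/2)^m * (1+β)^T
  have step1 : ∑ k ∈ Finset.Icc m T, (T.choose k : ℝ) * β ^ k * (1 - β) ^ (T - k)
      ≤ (1/2 : ℝ) ^ m * (1 + β) ^ T := by
    calc ∑ k ∈ Finset.Icc m T, (T.choose k : ℝ) * β ^ k * (1 - β) ^ (T - k)
        ≤ ∑ k ∈ Finset.Icc m T,
            (1/2 : ℝ) ^ m * ((T.choose k : ℝ) * (2*β) ^ k * (1 - β) ^ (T - k)) := by
          refine Finset.sum_le_sum fun k hk => ?_
          have hkm : m ≤ k := (Finset.mem_Icc.mp hk).1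
          have hβk : β ^ k = (1/2 : ℝ) ^ k * (2*β) ^ k := by
            rw [← mul_pow]; ring_nf
          have hle : (1/2 : ℝ) ^ k ≤ (1/2 : ℝ) ^ m :=
            pow_le_pow_of_le_one (by norm_num) (by norm_num) hkm
          have hnn : (0:ℝ) ≤ (T.choose k : ℝ) * (2*β) ^ k * (1 - β) ^ (T - k) := by
            positivity
          calc (T.choose k : ℝ) * β ^ k * (1 - β) ^ (T - k)
              = (1/2 : ℝ) ^ k * ((T.choose k : ℝ) * (2*β) ^ k * (1 - β) ^ (T - k)) := by
                rw [hβk]; ring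
            _ ≤ (1/2 : ℝ) ^ m * ((T.choose k : ℝ) * (2*β) ^ k * (1 - β) ^ (T - k)) :=
                mul_le_mul_of_nonneg_right hle hnn
      _ = (1/2 : ℝ) ^ m * ∑ k ∈ Finset.Icc m T,
            (T.choose k : ℝ) * (2*β) ^ k * (1 - β) ^ (T - k) := by
          rw [Finset.mul_sum]
      _ ≤ (1/2 : ℝ) ^ m * ∑ k ∈ Finset.range (T+1),
            (T.choose k : ℝ) * (2*β) ^ k * (1 - β) ^ (T - k) := by
          refine mul_le_mul_of_nonneg_left ?_ (by positivity)
          refine Finset.sum_le_sum_of_subset_of_nonneg ?_ ?_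
          · intro x hx
            simp only [Finset.mem_Icc, Finset.mem_range] at *
            omega
          · intro k _ _
            positivity
      _ = (1/2 : ℝ) ^ m * (2*β + (1 - β)) ^ T := by
          rw [add_pow]
          congr 1
          refine Finset.sum_congr rfl fun k _ => by ring
      _ = (1/2 : ℝ) ^ m * (1 + β) ^ T := by ring_nf
  -- Step 2: (1/2)^m * (1+β)^T ≤ exp (β*T - m * log 2)
  have step2 : (1/2 : ℝ) ^ m * (1 + β) ^ T ≤ Real.exp (β * T - m * Real.log 2) := by
    have e1 : (1/2 : ℝ) ^ m = Real.exp (-(m : ℝ) * Real.log 2) := by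
      rw [← Real.exp_log (show (0:ℝ) < 1/2 by norm_num)]
      rw [← Real.exp_nat_mul]
      congr 1
      rw [show Real.log (1/2) = - Real.log 2 by
        rw [one_div, Real.log_inv]]
      ring
    have e2 : (1 + β) ^ T ≤ Real.exp (β * T) := by
      have h := Real.add_one_le_exp β
      calc (1 + β) ^ T ≤ (Real.exp β) ^ T := by
            refine pow_le_pow_left₀ (by linarith) (by linarith) T
        _ = Real.exp (β * T) := by
            rw [← Real.exp_nat_mul]; ring_nf
    calc (1/2 : ℝ) ^ m * (1 + β) ^ T
        ≤ Real.exp (-(m : ℝ) * Real.log 2) * Real.exp (β * T) := by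
          rw [e1]
          exact mul_le_mul_of_nonneg_left e2 (Real.exp_pos _).le
      _ = Real.exp (β * T - m * Real.log 2) := by
          rw [← Real.exp_add]; ring_nf
  -- Step 3: exponent bound
  have step3 : β * T - (m : ℝ) * Real.log 2 ≤ -(t : ℝ) / 12 := by
    have hmt : (t : ℝ) / 2 ≤ (m : ℝ) := Nat.le_ceil _
    have hlog : (0.6931471803 : ℝ) < Real.log 2 := Real.log_two_gt_d9
    have h4β : (0:ℝ) < 1 - 4 * β := by linarith
    have hβn : 4 * β * (n : ℝ) ≤ (t : ℝ) * (1 - 4 * β) := by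
      have h := ht
      rw [ge_iff_le, div_mul_eq_mul_div, div_le_iff₀ h4β] at h
      linarith
    have hT' : (T : ℝ) = (n : ℝ) + (t : ℝ) := by rw [hT]; push_cast; ring
    have htpos : (0:ℝ) < t := by exact_mod_cast ht1
    have hprod : (t : ℝ) / 2 * (0.6931471803 : ℝ) ≤ (m : ℝ) * Real.log 2 := by
      apply mul_le_mul hmt hlog.le (by norm_num) (by positivity)
    rw [hT']
    nlinarith [hprod, htpos, hβn]
  calc ∑ k ∈ Finset.Icc m T, (T.choose k : ℝ) * β ^ k * (1 - β) ^ (T - k)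
      ≤ (1/2 : ℝ) ^ m * (1 + β) ^ T := step1
    _ ≤ Real.exp (β * T - m * Real.log 2) := step2
    _ ≤ Real.exp (-(t : ℝ) / 12) := Real.exp_le_exp.mpr step3
end

section
/- Let β be a real number with 0 < β ≤ 1/5, and let n, t be natural numbers with t ≥ 1 and (t : ℝ) ≥ (4β/(1−4β)) · n; set T = n + t. Let μ be the product measure on (Fin T → Bool) whose coordinates are independent Bernoulli(β) (with value true having probability β). Then the μ-measure of the set of all a : Fin T → Bool with the property that every f : ℕ → ℤ satisfying f(0) = 1 and, for all k < T, (a(k) = false → f(k+1) = f(k) + 1) and (a(k) = true → f(k+1) ≥ f(k) − 1), satisfies f(T) > n, is at least 1 − exp(−t/12). -/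
open MeasureTheory

open Finset ENNReal


lemma aux_walk (T : ℕ) (a : Fin T → Bool) (f : ℕ → ℤ) (h0 : f 0 = 1)
    (hstep : ∀ k : Fin T,
      (a k = false → f ((k : ℕ) + 1) = f (k : ℕ) + 1) ∧
      (a k = true → f ((k : ℕ) + 1) ≥ f (k : ℕ) - 1)) :
    f T ≥ 1 + T - 2 * ((univ.filter fun k => a k = true).card : ℤ) := by
  set c : ℕ → ℤ := fun k => if h : k < T then (if a ⟨k, h⟩ = true then -1 else 1) else 0 with hc
  have key : ∀ m, m ≤ T → f m ≥ 1 + ∑ k ∈ range m, c k := by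
    intro m
    induction m with
    | zero => simp [h0]
    | succ m ih =>
      intro hm
      have hmT : m < T := hm
      have ihm := ih (le_of_lt hmT)
      rw [Finset.sum_range_succ]
      have hcm : c m = if a ⟨m, hmT⟩ = true then -1 else 1 := by
        simp [hc, hmT]
      rcases Bool.eq_false_or_eq_true (a ⟨m, hmT⟩) with hb | hb
      · have := (hstep ⟨m, hmT⟩).2 hb
        simp only [Fin.val_mk] at this
        rw [hcm, hb, if_pos rfl]
        omega
      · have := (hstep ⟨m, hmT⟩).1 hb
        simp only [Fin.val_mk] at this
        rw [hcm, hb]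
        norm_num
        omega
  have hsum : ∑ k ∈ range T, c k = T - 2 * ((univ.filter fun k => a k = true).card : ℤ) := by
    rw [← Fin.sum_univ_eq_sum_range]
    have : ∀ k : Fin T, c (k : ℕ) = 1 - 2 * (if a k = true then 1 else 0) := by
      intro k
      simp only [hc, k.isLt, dif_pos, Fin.eta]
      by_cases h : a k = true <;> simp [h]
    rw [Finset.sum_congr rfl fun k _ => this k]
    rw [Finset.sum_sub_distrib, ← Finset.mul_sum, Finset.sum_boole]
    simp [mul_comm]
  have := key T le_rfl
  rw [hsum] at this
  linarith

lemma aux_singleton (T : ℕ) (p : NNReal) (hp : p ≤ 1)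
    (μ : Measure (Fin T → Bool))
    (hμ : μ = Measure.pi (fun _ : Fin T => (PMF.bernoulli p hp).toMeasure))
    (a : Fin T → Bool) :
    μ {a} = ∏ k : Fin T, (if a k then (p : ℝ≥0∞) else 1 - p) := by
  have h1 : ({a} : Set (Fin T → Bool)) = Set.pi Set.univ (fun k => {a k}) := by
    ext b; simp [funext_iff, eq_comm]
  rw [hμ, h1, Measure.pi_pi]
  refine Finset.prod_congr rfl fun k _ => ?_
  rw [PMF.toMeasure_apply_singleton _ _ (measurableSet_singleton _), PMF.bernoulli_apply]
  cases a k <;> simp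

lemma aux_prodsum (T : ℕ) (w : Bool → ℝ≥0∞) :
    ∑ a : Fin T → Bool, ∏ k : Fin T, w (a k) = (w false + w true) ^ T := by
  rw [show (univ : Finset (Fin T → Bool)) = Fintype.piFinset (fun _ => (univ : Finset Bool))
      by rw [Fintype.piFinset_univ],
    ← Finset.prod_univ_sum (fun _ => (univ : Finset Bool)) (fun _ b => w b)]
  simp [add_comm]

/-- Probabilistic formulation of Lemma 1 (`th:line-time`): under the product of
independent Bernoulli(β) measures on `Fin (n+t) → Bool` (coordinate `true` being
adversarial with probability β), with probability at least `1 - exp(-t/12)` the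
round outcomes `a` are such that every evolution `f` of the computation position
(honest rounds advance by one, adversarial rounds roll back by at most one)
passes position `n` within `T = n + t` rounds. -/
theorem stmt_2 (β : ℝ) (hβ0 : 0 < β) (hβ : β ≤ 1 / 5)
    (n t : ℕ) (ht1 : 1 ≤ t) (ht : (t : ℝ) ≥ (4 * β / (1 - 4 * β)) * n)
    (T : ℕ) (hT : T = n + t)
    (μ : Measure (Fin T → Bool))
    (hμ : μ = Measure.pi (fun _ : Fin T =>
      (PMF.bernoulli (Real.toNNReal β)
        (Real.toNNReal_le_one.mpr (by linarith))).toMeasure)) :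
    ENNReal.ofReal (1 - Real.exp (-(t : ℝ) / 12)) ≤
      μ {a : Fin T → Bool |
          ∀ f : ℕ → ℤ, f 0 = 1 →
            (∀ k : Fin T,
              (a k = false → f ((k : ℕ) + 1) = f (k : ℕ) + 1) ∧
              (a k = true → f ((k : ℕ) + 1) ≥ f (k : ℕ) - 1)) →
            f T > (n : ℤ)} := by
  classical
  have hprob : IsProbabilityMeasure μ := by rw [hμ]; infer_instance
  set p : ℝ≥0∞ := ENNReal.ofReal β with hpdef
  set X : (Fin T → Bool) → ℕ := fun a => (univ.filter fun k => a k = true).card with hX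
  set G : Set (Fin T → Bool) := {a | 2 * X a ≤ t} with hG
  -- Step 1: G is contained in the target set
  have hsub : G ⊆ {a : Fin T → Bool |
          ∀ f : ℕ → ℤ, f 0 = 1 →
            (∀ k : Fin T,
              (a k = false → f ((k : ℕ) + 1) = f (k : ℕ) + 1) ∧
              (a k = true → f ((k : ℕ) + 1) ≥ f (k : ℕ) - 1)) →
            f T > (n : ℤ)} := by
    intro a ha f h0 hstep
    have h1 : f T ≥ 1 + (T:ℤ) - 2 * (X a : ℤ) := aux_walk T a f h0 hstep
    have h2 : 2 * X a ≤ t := ha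
    have h3 : (X a : ℤ) * 2 ≤ t := by exact_mod_cast by omega
    have hTn : (T : ℤ) = n + t := by exact_mod_cast hT
    omega
  -- Step 2: bound the measure of the complement
  set s : ℕ := t / 2 + 1 with hs
  set B : Finset (Fin T → Bool) := univ.filter (fun a => ¬ (2 * X a ≤ t)) with hB
  have hGc : Gᶜ = (↑B : Set (Fin T → Bool)) := by
    ext a; simp [hG, hB]
  have hsingle : ∀ a : Fin T → Bool,
      μ {a} = ∏ k : Fin T, (if a k then p else 1 - p) :=
    aux_singleton T (Real.toNNReal β) (Real.toNNReal_le_one.mpr (by linarith)) μ hμ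
  have hmeasGc : μ Gᶜ = ∑ a ∈ B, μ {a} := by
    rw [hGc, show (↑B : Set (Fin T → Bool)) = ⋃ a ∈ B, {a} by ext x; simp]
    exact measure_biUnion_finset
      (fun x _ y _ hxy => Set.disjoint_singleton.mpr hxy)
      (fun a _ => measurableSet_singleton a)
  -- key pointwise bound
  have hpoint : ∀ a ∈ B, (2 : ℝ≥0∞) ^ s * μ {a} ≤
      ∏ k : Fin T, (if a k then 2 * p else 1 - p) := by
    intro a haB
    have hXa : s ≤ X a := by
      simp only [hB, mem_filter] at haB
      omega
    have h2X : (2 : ℝ≥0∞) ^ s ≤ ∏ k : Fin T, (if a k then (2:ℝ≥0∞) else 1) := by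
      rw [Finset.prod_ite, Finset.prod_const, Finset.prod_const, one_pow, mul_one]
      calc (2:ℝ≥0∞) ^ s ≤ 2 ^ (X a) := by
            exact pow_le_pow_right₀ (by norm_num) hXa
        _ = 2 ^ (univ.filter fun k => a k = true).card := rfl
        _ = 2 ^ (univ.filter fun k => a k).card := by norm_num
    calc (2 : ℝ≥0∞) ^ s * μ {a}
        ≤ (∏ k : Fin T, (if a k then (2:ℝ≥0∞) else 1)) * ∏ k : Fin T, (if a k then p else 1 - p) := by
          rw [hsingle a]; exact mul_le_mul_left h2X _
      _ = ∏ k : Fin T, ((if a k then (2:ℝ≥0∞) else 1) * (if a k then p else 1 - p)) := by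
          rw [Finset.prod_mul_distrib]
      _ = ∏ k : Fin T, (if a k then 2 * p else 1 - p) := by
          refine Finset.prod_congr rfl fun k _ => ?_
          cases a k <;> simp
  have hchern : (2 : ℝ≥0∞) ^ s * μ Gᶜ ≤ (1 + p) ^ T := by
    rw [hmeasGc, Finset.mul_sum]
    calc ∑ a ∈ B, (2:ℝ≥0∞) ^ s * μ {a}
        ≤ ∑ a ∈ B, ∏ k : Fin T, (if a k then 2 * p else 1 - p) :=
          Finset.sum_le_sum hpoint
      _ ≤ ∑ a : Fin T → Bool, ∏ k : Fin T, (if a k then 2 * p else 1 - p) :=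
          Finset.sum_le_sum_of_subset (Finset.subset_univ B)
      _ = ((1 - p) + 2 * p) ^ T := aux_prodsum T (fun b => if b then 2 * p else 1 - p)
      _ = (1 + p) ^ T := by
          congr 1
          have hp1 : p ≤ 1 := ENNReal.ofReal_le_one.mpr (by linarith)
          rw [two_mul, ← add_assoc, tsub_add_cancel_of_le hp1]
  -- convert to a real bound
  have hb1 : (1 + p) ^ T ≤ ENNReal.ofReal (Real.exp (β * T)) := by
    have : (1:ℝ≥0∞) + p = ENNReal.ofReal (1 + β) := by
      rw [ENNReal.ofReal_add (by norm_num) (le_of_lt hβ0), ENNReal.ofReal_one]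
    rw [this, ← ENNReal.ofReal_pow (by linarith)]
    apply ENNReal.ofReal_le_ofReal
    calc (1 + β) ^ T ≤ (Real.exp β) ^ T :=
          pow_le_pow_left₀ (by linarith) (by linarith [Real.add_one_le_exp β]) T
      _ = Real.exp (β * T) := by rw [mul_comm, Real.exp_nat_mul]
  have h2s : (2 : ℝ≥0∞) ^ s = ENNReal.ofReal ((2:ℝ) ^ s) := by
    rw [ENNReal.ofReal_pow (by norm_num : (0:ℝ) ≤ 2)]
    norm_num
  have hGcle : μ Gᶜ ≤ ENNReal.ofReal (Real.exp (β * T) / 2 ^ s) := by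
    have h2ne : ((2:ℝ≥0∞) ^ s) ≠ 0 := by positivity
    have h2top : ((2:ℝ≥0∞) ^ s) ≠ ⊤ := by
      exact ENNReal.pow_ne_top (by norm_num)
    rw [ENNReal.ofReal_div_of_pos (by positivity), ← h2s]
    rw [ENNReal.le_div_iff_mul_le (Or.inl h2ne) (Or.inl h2top), mul_comm]
    exact le_trans hchern hb1
  -- real-number estimate
  have hreal : Real.exp (β * T) / 2 ^ s ≤ Real.exp (-(t:ℝ) / 12) := by
    have hβT : β * T ≤ (t:ℝ) / 4 := by
      have h4β : (0:ℝ) < 1 - 4 * β := by linarith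
      have hdiv : 4 * β * n / (1 - 4 * β) ≤ (t:ℝ) := by
        rw [← div_mul_eq_mul_div]; exact ht
      have h1 : 4 * β * n ≤ (t:ℝ) * (1 - 4 * β) := (div_le_iff₀ h4β).mp hdiv
      have hTr : (T:ℝ) = n + t := by exact_mod_cast hT
      rw [hTr]; nlinarith
    have hsr : ((t:ℝ) + 1) / 2 ≤ (s:ℝ) := by
      have : t + 1 ≤ 2 * s := by omega
      have h2 : ((t:ℝ) + 1) ≤ 2 * s := by exact_mod_cast this
      linarith
    have hlog : (0.6931471803 : ℝ) < Real.log 2 := Real.log_two_gt_d9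
    have h2pow : (2:ℝ) ^ s = Real.exp (s * Real.log 2) := by
      rw [Real.exp_nat_mul, Real.exp_log (by norm_num : (0:ℝ) < 2)]
    rw [div_le_iff₀ (by positivity), h2pow, ← Real.exp_add, Real.exp_le_exp]
    have htnn : (0:ℝ) ≤ t := Nat.cast_nonneg t
    nlinarith [mul_le_mul_of_nonneg_right hsr (le_of_lt (lt_trans (by norm_num) hlog))]
  -- final assembly
  have hone : (1:ℝ≥0∞) ≤ μ G + μ Gᶜ := by
    rw [← measure_univ (μ := μ), ← Set.union_compl_self G]
    exact measure_union_le G Gᶜ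
  have hmain : ENNReal.ofReal (1 - Real.exp (-(t:ℝ)/12)) ≤ μ G := by
    have he : Real.exp (-(t:ℝ)/12) ≤ 1 := by
      rw [Real.exp_le_one_iff]
      have : (0:ℝ) ≤ t := Nat.cast_nonneg t
      linarith
    rw [ENNReal.ofReal_sub _ (Real.exp_pos _).le, ENNReal.ofReal_one]
    rw [tsub_le_iff_right]
    calc (1:ℝ≥0∞) ≤ μ G + μ Gᶜ := hone
      _ ≤ μ G + ENNReal.ofReal (Real.exp (-(t:ℝ)/12)) := by
          gcongr
          exact le_trans hGcle (ENNReal.ofReal_le_ofReal hreal)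
  exact le_trans hmain (measure_mono hsub)
end

section
/- Let β be a real number with 0 < β < 1/8 and let ℓ be a natural number; set t = ⌈(4β/(1−4β)) · ℓ⌉ and T = ℓ + t. Then Σ_{k = ⌈t/2⌉}^{T} C(T, k) · β^k · (1−β)^{T−k} ≤ exp(−β·ℓ/(3(1−4β))). -/
open Finset Real

/-- Probabilistic core of Lemma 2 (`lem:line-majority`): with
`t = ⌈(4β/(1-4β)) ℓ⌉` and `T = ℓ + t`, the probability that a `Binomial(T, β)`
random variable is at least `t/2` is at most `exp (-βℓ/(3(1-4β)))`. -/
theorem stmt_3 (β : ℝ) (hβ0 : 0 < β) (hβ : β < 1 / 8)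
    (ℓ : ℕ) (t : ℕ) (htdef : t = ⌈(4 * β / (1 - 4 * β)) * ℓ⌉₊)
    (T : ℕ) (hT : T = ℓ + t) :
    ∑ k ∈ Finset.Icc ⌈(t : ℝ) / 2⌉₊ T,
      (T.choose k : ℝ) * β ^ k * (1 - β) ^ (T - k) ≤
      Real.exp (-(β * ℓ) / (3 * (1 - 4 * β))) := by
  set m := ⌈(t : ℝ) / 2⌉₊ with hm
  have hβ1 : (0:ℝ) < 1 - β := by linarith
  have h14 : (0:ℝ) < 1 - 4 * β := by linarith
  have hmt : (t : ℝ) / 2 ≤ m := Nat.le_ceil _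
  have ht0 : (4 * β / (1 - 4 * β)) * ℓ ≤ (t : ℝ) := by
    rw [htdef]; exact Nat.le_ceil _
  have ht0' : 4 * β * ℓ ≤ (t : ℝ) * (1 - 4 * β) := by
    rw [div_mul_eq_mul_div, div_le_iff₀ h14] at ht0
    linarith
  have h2m : (0:ℝ) < 2 ^ m := by positivity
  -- Step 1: termwise bound by the tilted terms
  have key : ∑ k ∈ Finset.Icc m T, (T.choose k : ℝ) * β ^ k * (1 - β) ^ (T - k)
      ≤ (∑ k ∈ Finset.range (T + 1),
          (T.choose k : ℝ) * (2 * β) ^ k * (1 - β) ^ (T - k)) / 2 ^ m := by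
    rw [Finset.sum_div]
    have hsub : Finset.Icc m T ⊆ Finset.range (T + 1) := by
      intro k hk
      rw [Finset.mem_range, Nat.lt_succ_iff]
      exact (Finset.mem_Icc.mp hk).2
    refine le_trans (Finset.sum_le_sum ?_)
      (Finset.sum_le_sum_of_subset_of_nonneg hsub ?_)
    · intro k hk
      obtain ⟨hk1, _⟩ := Finset.mem_Icc.mp hk
      rw [le_div_iff₀ h2m]
      have h2k : (2:ℝ) ^ m ≤ 2 ^ k := pow_le_pow_right₀ (by norm_num) hk1
      have hnn : (0:ℝ) ≤ (T.choose k : ℝ) * β ^ k * (1 - β) ^ (T - k) := by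
        positivity
      calc (T.choose k : ℝ) * β ^ k * (1 - β) ^ (T - k) * 2 ^ m
          ≤ (T.choose k : ℝ) * β ^ k * (1 - β) ^ (T - k) * 2 ^ k :=
            mul_le_mul_of_nonneg_left h2k hnn
        _ = (T.choose k : ℝ) * (2 * β) ^ k * (1 - β) ^ (T - k) := by
            rw [mul_pow]; ring
    · intro k _ _
      positivity
  -- Step 2: binomial theorem
  have hbin : ∑ k ∈ Finset.range (T + 1),
      (T.choose k : ℝ) * (2 * β) ^ k * (1 - β) ^ (T - k) = (1 + β) ^ T := by
    have := add_pow (2 * β) (1 - β) T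
    have h : (2 * β + (1 - β)) = (1 + β : ℝ) := by ring
    rw [h] at this
    rw [this]
    refine Finset.sum_congr rfl fun k _ => by ring
  -- Step 3: (1+β)^T ≤ exp (β T)
  have hexp : (1 + β) ^ T ≤ Real.exp (β * T) := by
    have h1 : (1 + β : ℝ) ≤ Real.exp β := by
      have := Real.add_one_le_exp β; linarith
    calc (1 + β) ^ T ≤ (Real.exp β) ^ T :=
          pow_le_pow_left₀ (by linarith) h1 T
      _ = Real.exp (β * T) := by
          rw [← Real.exp_nat_mul]; ring_nf
  -- Step 4: final arithmetic
  have h2meq : (2:ℝ) ^ m = Real.exp (m * Real.log 2) := by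
    rw [← Real.exp_log h2m, Real.log_pow]
  have hL : (0.6931471803 : ℝ) < Real.log 2 := Real.log_two_gt_d9
  have hfinal : Real.exp (β * T) / 2 ^ m ≤
      Real.exp (-(β * ℓ) / (3 * (1 - 4 * β))) := by
    rw [h2meq, ← Real.exp_sub, Real.exp_le_exp]
    rw [hT]
    push_cast
    rw [le_div_iff₀ (by linarith : (0:ℝ) < 3 * (1 - 4 * β))]
    nlinarith [mul_nonneg hβ0.le (Nat.cast_nonneg ℓ : (0:ℝ) ≤ ℓ),
      mul_nonneg (by linarith : (0:ℝ) ≤ 2 * (m:ℝ) - t)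
        (mul_pos h14 (by linarith : (0:ℝ) < Real.log 2)).le,
      mul_nonneg (by linarith : (0:ℝ) ≤ (t:ℝ) * (1 - 4*β) - 4*β*ℓ)
        (by linarith : (0:ℝ) ≤ Real.log 2 - 2*β),
      mul_nonneg (mul_nonneg hβ0.le (Nat.cast_nonneg ℓ : (0:ℝ) ≤ ℓ))
        (by linarith : (0:ℝ) ≤ 6 * Real.log 2 - 4)]
  calc ∑ k ∈ Finset.Icc m T, (T.choose k : ℝ) * β ^ k * (1 - β) ^ (T - k)
      ≤ (1 + β) ^ T / 2 ^ m := by rw [← hbin]; exact key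
    _ ≤ Real.exp (β * T) / 2 ^ m := by
        gcongr
    _ ≤ _ := hfinal
end

section
/- For every real number β with 0 ≤ β ≤ 1/12 and every natural number ℓ ≥ 1: Σ_{j=0}^{∞} C(ℓ+2j, ℓ+j) · β^{ℓ+j} ≤ 2 · (1/2)^{ℓ}. -/
lemma aux_choose_le_two_pow (n k : ℕ) : n.choose k ≤ 2 ^ n := by
  rcases le_or_gt k n with h | h
  · calc n.choose k ≤ ∑ i ∈ Finset.range (n + 1), n.choose i :=
        Finset.single_le_sum (f := fun i => n.choose i) (fun _ _ => Nat.zero_le _)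
          (Finset.mem_range.mpr (Nat.lt_succ_of_le h))
      _ = 2 ^ n := Nat.sum_range_choose n
  · simp [Nat.choose_eq_zero_of_lt h]

/-- Key estimate in the proof of Lemma 4 (`lem:advsupervisor`): for
`0 ≤ β ≤ 1/12` and `ℓ ≥ 1`, `∑_{j ≥ 0} C(ℓ+2j, ℓ+j) β^{ℓ+j} ≤ 2 (1/2)^ℓ`. -/
theorem stmt_5 (β : ℝ) (hβ0 : 0 ≤ β) (hβ : β ≤ 1 / 12) (ℓ : ℕ) (hℓ : 1 ≤ ℓ) :
    ∑' j : ℕ, ((ℓ + 2 * j).choose (ℓ + j) : ℝ) * β ^ (ℓ + j) ≤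
      2 * (1 / 2 : ℝ) ^ ℓ := by
  have hr0 : (0:ℝ) ≤ 4 * β := by linarith
  have hr1 : 4 * β < 1 := by linarith
  have hpt : ∀ j : ℕ, ((ℓ + 2 * j).choose (ℓ + j) : ℝ) * β ^ (ℓ + j) ≤
      (2 * β) ^ ℓ * (4 * β) ^ j := by
    intro j
    have hc : ((ℓ + 2 * j).choose (ℓ + j) : ℝ) ≤ 2 ^ (ℓ + 2 * j) := by
      exact_mod_cast aux_choose_le_two_pow (ℓ + 2 * j) (ℓ + j)
    have hb : (0:ℝ) ≤ β ^ (ℓ + j) := pow_nonneg hβ0 _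
    calc ((ℓ + 2 * j).choose (ℓ + j) : ℝ) * β ^ (ℓ + j)
        ≤ 2 ^ (ℓ + 2 * j) * β ^ (ℓ + j) := mul_le_mul_of_nonneg_right hc hb
      _ = (2 * β) ^ ℓ * (4 * β) ^ j := by
          rw [pow_add, pow_add, mul_pow, mul_pow, pow_mul]
          ring
  have hsum : Summable (fun j : ℕ => (2 * β) ^ ℓ * (4 * β) ^ j) :=
    (summable_geometric_of_lt_one hr0 hr1).mul_left _
  have hsum0 : Summable (fun j : ℕ => ((ℓ + 2 * j).choose (ℓ + j) : ℝ) * β ^ (ℓ + j)) := by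
    refine Summable.of_nonneg_of_le (fun j => ?_) hpt hsum
    positivity
  have h1 : ∑' j : ℕ, ((ℓ + 2 * j).choose (ℓ + j) : ℝ) * β ^ (ℓ + j) ≤
      ∑' j : ℕ, (2 * β) ^ ℓ * (4 * β) ^ j := Summable.tsum_le_tsum hpt hsum0 hsum
  have h2 : ∑' j : ℕ, (2 * β) ^ ℓ * (4 * β) ^ j = (2 * β) ^ ℓ * (1 - 4 * β)⁻¹ := by
    rw [tsum_mul_left, tsum_geometric_of_lt_one hr0 hr1]
  have h3 : (2 * β) ^ ℓ * (1 - 4 * β)⁻¹ ≤ 2 * (1 / 2 : ℝ) ^ ℓ := by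
    have hA : (2 * β) ^ ℓ ≤ (1 / 6 : ℝ) ^ ℓ :=
      pow_le_pow_left₀ (by linarith) (by linarith) _
    have hB : (1 - 4 * β)⁻¹ ≤ (3 / 2 : ℝ) := by
      rw [inv_le_comm₀ (by linarith) (by norm_num)]
      linarith
    calc (2 * β) ^ ℓ * (1 - 4 * β)⁻¹ ≤ (1 / 6 : ℝ) ^ ℓ * (3 / 2) := by
          apply mul_le_mul hA hB (inv_nonneg.mpr (by linarith)) (by positivity)
      _ ≤ 2 * (1 / 2 : ℝ) ^ ℓ := by
          have : (1 / 6 : ℝ) ^ ℓ ≤ (1 / 2 : ℝ) ^ ℓ :=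
            pow_le_pow_left₀ (by norm_num) (by norm_num) _
          nlinarith [pow_nonneg (by norm_num : (0:ℝ) ≤ 1/2) ℓ]
    
  linarith [h1, h2.le, h3]
end

section
/- Let β be a real number with 0 ≤ β ≤ 1/3 and set γ = β/(1−β). Let ℓ ≥ 2 be a natural number and define a, h : {0, …, ℓ−1} → ℝ by a(ℓ−1) = β/(1−β), h(ℓ−1) = 1/(1−β), and for 0 ≤ i ≤ ℓ−2: a(i) = γ · a(i+1) and h(i) = h(i+1) + γ · a(i+1). Then: (i) a(i) ≤ γ^{ℓ−i} · h(i) for all 0 ≤ i ≤ ℓ−1; (ii) h(i) ≤ (1 + γ^{ℓ−i}) · h(i+1) for all 0 ≤ i ≤ ℓ−2; and (iii) h(0) ≤ (1/(1−β)) · exp(γ²/(1−γ)). -/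
/-- Recurrence analysis from the proof of Lemma 7 (`th:line-output`): with
`γ = β/(1-β)`, `a (ℓ-1) = β/(1-β)`, `h (ℓ-1) = 1/(1-β)`, and the recurrences
`a i = γ a (i+1)`, `h i = h (i+1) + γ a (i+1)` for `i ≤ ℓ-2`, one has
(i) `a i ≤ γ^(ℓ-i) h i`, (ii) `h i ≤ (1 + γ^(ℓ-i)) h (i+1)`, and
(iii) `h 0 ≤ (1/(1-β)) exp (γ²/(1-γ))`. -/
theorem stmt_6 (β : ℝ) (hβ0 : 0 ≤ β) (hβ : β ≤ 1 / 3)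
    (γ : ℝ) (hγ : γ = β / (1 - β))
    (ℓ : ℕ) (hℓ : 2 ≤ ℓ) (a h : ℕ → ℝ)
    (ha_last : a (ℓ - 1) = β / (1 - β))
    (hh_last : h (ℓ - 1) = 1 / (1 - β))
    (ha_rec : ∀ i, i ≤ ℓ - 2 → a i = γ * a (i + 1))
    (hh_rec : ∀ i, i ≤ ℓ - 2 → h i = h (i + 1) + γ * a (i + 1)) :
    (∀ i, i ≤ ℓ - 1 → a i ≤ γ ^ (ℓ - i) * h i) ∧
    (∀ i, i ≤ ℓ - 2 → h i ≤ (1 + γ ^ (ℓ - i)) * h (i + 1)) ∧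
    h 0 ≤ (1 / (1 - β)) * Real.exp (γ ^ 2 / (1 - γ)) := by
  have h1β : 0 < 1 - β := by linarith
  have hγ0 : 0 ≤ γ := by rw [hγ]; positivity
  have hγhalf : γ ≤ 1/2 := by
    rw [hγ, div_le_iff₀ h1β]; linarith
  have akey : ∀ k, k ≤ ℓ - 1 → a (ℓ - 1 - k) = γ ^ (k+1) := by
    intro k
    induction k with
    | zero => intro _; simpa [← hγ] using ha_last
    | succ k ih =>
      intro hk
      have hk' : k ≤ ℓ - 1 := Nat.le_of_succ_le hk
      have h1 : ℓ - 1 - (k+1) ≤ ℓ - 2 := by omega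
      have h2 : ℓ - 1 - (k+1) + 1 = ℓ - 1 - k := by omega
      rw [ha_rec _ h1, h2, ih hk', pow_succ]
      ring
  have aclosed : ∀ i, i ≤ ℓ - 1 → a i = γ ^ (ℓ - i) := by
    intro i hi
    have := akey (ℓ - 1 - i) (by omega)
    have e1 : ℓ - 1 - (ℓ - 1 - i) = i := by omega
    have e2 : ℓ - 1 - i + 1 = ℓ - i := by omega
    rw [e1, e2] at this; exact this
  have hone : (1:ℝ) ≤ 1/(1-β) := by
    rw [le_div_iff₀ h1β]; linarith
  have hkey : ∀ k, k ≤ ℓ - 1 → 1/(1-β) ≤ h (ℓ - 1 - k) := by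
    intro k
    induction k with
    | zero => intro _; simp [hh_last]
    | succ k ih =>
      intro hk
      have hk' : k ≤ ℓ - 1 := Nat.le_of_succ_le hk
      have h1 : ℓ - 1 - (k+1) ≤ ℓ - 2 := by omega
      have h2 : ℓ - 1 - (k+1) + 1 = ℓ - 1 - k := by omega
      have ha' : 0 ≤ a (ℓ - 1 - k) := by
        rw [aclosed _ (by omega)]; positivity
      have := ih hk'
      rw [hh_rec _ h1, h2]
      nlinarith
  have hlow : ∀ i, i ≤ ℓ - 1 → 1/(1-β) ≤ h i := by
    intro i hi
    have := hkey (ℓ - 1 - i) (by omega)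
    rwa [show ℓ - 1 - (ℓ - 1 - i) = i by omega] at this
  refine ⟨?_, ?_, ?_⟩
  · intro i hi
    rw [aclosed i hi]
    have h1 : (1:ℝ) ≤ h i := le_trans hone (hlow i hi)
    nlinarith [pow_nonneg hγ0 (ℓ - i)]
  · intro i hi
    rw [hh_rec i hi, aclosed (i+1) (by omega)]
    have hhi : (1:ℝ) ≤ h (i+1) := le_trans hone (hlow (i+1) (by omega))
    have he : γ * γ ^ (ℓ - (i+1)) = γ ^ (ℓ - i) := by
      rw [show ℓ - i = ℓ - (i+1) + 1 by omega, pow_succ]; ring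
    rw [he]
    nlinarith [pow_nonneg hγ0 (ℓ - i)]
  · have hsum : ∀ k, k ≤ ℓ - 1 →
        h (ℓ - 1 - k) = 1/(1-β) + ∑ j ∈ Finset.range k, γ ^ (j+2) := by
      intro k
      induction k with
      | zero => intro _; simp [hh_last]
      | succ k ih =>
        intro hk
        have hk' : k ≤ ℓ - 1 := Nat.le_of_succ_le hk
        have h1 : ℓ - 1 - (k+1) ≤ ℓ - 2 := by omega
        have h2 : ℓ - 1 - (k+1) + 1 = ℓ - 1 - k := by omega
        rw [hh_rec _ h1, h2, ih hk', akey k hk', Finset.sum_range_succ]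
        ring
    have h0 := hsum (ℓ - 1) le_rfl
    rw [show ℓ - 1 - (ℓ - 1) = 0 by omega] at h0
    have hγ1 : γ < 1 := by linarith
    have hs : ∑ j ∈ Finset.range (ℓ-1), γ ^ (j+2) ≤ γ^2 / (1 - γ) := by
      have he : ∑ j ∈ Finset.range (ℓ-1), γ ^ (j+2)
          = γ^2 * ∑ j ∈ Finset.range (ℓ-1), γ ^ j := by
        rw [Finset.mul_sum]
        exact Finset.sum_congr rfl fun j _ => by ring
      have hg : ∑ j ∈ Finset.range (ℓ-1), γ ^ j ≤ 1 / (1 - γ) := by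
        have h1γ : (0:ℝ) < 1 - γ := by linarith
        rw [geom_sum_eq (ne_of_lt hγ1),
          show (γ^(ℓ-1)-1)/(γ-1) = (1-γ^(ℓ-1))/(1-γ) by
            rw [div_eq_div_iff (by linarith) (by linarith)]; ring,
          div_le_div_iff₀ h1γ h1γ]
        nlinarith [pow_nonneg hγ0 (ℓ-1)]
      rw [he, div_eq_mul_one_div]
      exact mul_le_mul_of_nonneg_left hg (by positivity)
    have hx0 : 0 ≤ γ^2 / (1-γ) := by
      have : 0 < 1 - γ := by linarith
      positivity
    have hexp := Real.add_one_le_exp (γ^2 / (1-γ))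
    nlinarith [h0, hs, hone, hx0, hexp]
end

section
/- Let d ≥ 1 be a natural number and let ε, c, D, s, β, n be real numbers with ε > 0, c > 1, D ≥ 0, n ≥ 2, 0 < β ≤ (1/(2(2d+1)))^{2+ε}, and s ≥ 2·(D + c·ln n / ln(2d+1))/ε. Then n · (2d+1)^{D+s−1} · (2β)^{s/2} ≤ n^{1−c}. -/
/-- Final inequality in the delay-sequence argument of Lemma 8 (`th:dag-runtime`):
the expected number of valid s-delay sequences,
`n (2d+1)^(D+s-1) (2β)^(s/2)`, is at most `n^(1-c)`. -/
theorem stmt_7 (d : ℕ) (hd : 1 ≤ d) (ε c D s β n : ℝ)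
    (hε : 0 < ε) (hc : 1 < c) (hD : 0 ≤ D) (hn : 2 ≤ n)
    (hβ0 : 0 < β) (hβ : β ≤ (1 / (2 * (2 * (d : ℝ) + 1))) ^ (2 + ε))
    (hs : s ≥ 2 * (D + c * Real.log n / Real.log (2 * (d : ℝ) + 1)) / ε) :
    n * (2 * (d : ℝ) + 1) ^ (D + s - 1) * (2 * β) ^ (s / 2) ≤ n ^ (1 - c) := by
  set K : ℝ := 2 * (d : ℝ) + 1 with hKdef
  have hd1 : (1 : ℝ) ≤ (d : ℝ) := by exact_mod_cast hd
  have hK3 : (3 : ℝ) ≤ K := by rw [hKdef]; linarith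
  have hK1 : (1 : ℝ) < K := by linarith
  have hK0 : (0 : ℝ) < K := by linarith
  have hn0 : (0 : ℝ) < n := by linarith
  have hlogK : 0 < Real.log K := Real.log_pos hK1
  have hlogn : 0 < Real.log n := Real.log_pos (by linarith)
  have hpos : 0 < c * Real.log n / Real.log K :=
    div_pos (mul_pos (by linarith) hlogn) hlogK
  have hs' : D + c * Real.log n / Real.log K ≤ ε * s / 2 := by
    have h := (div_le_iff₀ hε).mp hs
    nlinarith
  have hs0 : 0 ≤ s := by nlinarith
  -- Step 1 : 2β ≤ K^(-(2+ε))
  have h2K : (0 : ℝ) < 2 * K := by linarith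
  have h1 : (1 / (2 * K)) ^ (2 + ε) = (2 : ℝ) ^ (-(2 + ε)) * K ^ (-(2 + ε)) := by
    rw [one_div, Real.inv_rpow h2K.le, ← Real.rpow_neg h2K.le,
      Real.mul_rpow (by norm_num) hK0.le]
  have h2β : 2 * β ≤ K ^ (-(2 + ε)) := by
    have hb : 2 * β ≤ 2 * ((2 : ℝ) ^ (-(2 + ε)) * K ^ (-(2 + ε))) := by
      rw [← h1]; linarith
    have h2e : (2 : ℝ) ^ (-(2 + ε)) ≤ (2 : ℝ) ^ (-(1 : ℝ)) :=
      Real.rpow_le_rpow_of_exponent_le (by norm_num) (by linarith)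
    have h2e1 : (2 : ℝ) ^ (-(1 : ℝ)) = 1 / 2 := by
      rw [Real.rpow_neg_one]; norm_num
    have hKnn : 0 ≤ K ^ (-(2 + ε)) := Real.rpow_nonneg hK0.le _
    have hprod : (2:ℝ) ^ (-(2 + ε)) * K ^ (-(2 + ε)) ≤ (1 / 2) * K ^ (-(2 + ε)) :=
      mul_le_mul_of_nonneg_right (by rw [← h2e1]; exact h2e) hKnn
    linarith
  -- Step 2 : (2β)^(s/2) ≤ K^(-(2+ε)*(s/2))
  have hstep : (2 * β) ^ (s / 2) ≤ K ^ (-(2 + ε) * (s / 2)) := by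
    calc (2 * β) ^ (s / 2) ≤ (K ^ (-(2 + ε))) ^ (s / 2) :=
          Real.rpow_le_rpow (by linarith) h2β (by linarith)
      _ = K ^ (-(2 + ε) * (s / 2)) := (Real.rpow_mul hK0.le _ _).symm
  -- Main chain
  have hnKnn : 0 ≤ n * K ^ (D + s - 1) := by positivity
  calc n * K ^ (D + s - 1) * (2 * β) ^ (s / 2)
      ≤ n * K ^ (D + s - 1) * K ^ (-(2 + ε) * (s / 2)) := by
        exact mul_le_mul_of_nonneg_left hstep hnKnn
    _ = n * K ^ (D + s - 1 + -(2 + ε) * (s / 2)) := by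
        rw [mul_assoc, ← Real.rpow_add hK0]
    _ ≤ n * K ^ (-(c * Real.log n / Real.log K)) := by
        apply mul_le_mul_of_nonneg_left _ hn0.le
        apply Real.rpow_le_rpow_of_exponent_le hK1.le
        have hrw : D + s - 1 + -(2 + ε) * (s / 2) = D - 1 - ε * s / 2 := by ring
        rw [hrw]; linarith
    _ = n * n ^ (-c) := by
        congr 1
        rw [Real.rpow_def_of_pos hK0, Real.rpow_def_of_pos hn0]
        congr 1
        field_simp
    _ = n ^ (1 - c) := by
        nth_rewrite 1 [← Real.rpow_one n]
        rw [← Real.rpow_add hn0]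
        ring_nf
end

section
/- Let m, n, s be natural numbers with n ≥ 2 and n + s ≤ m, and let c ≥ 1 be a real number with (s : ℝ) ≥ c · (m/n) · ln n. Then C(m−s, n) / C(m, n) ≤ n^{−c}, where C(·,·) denotes binomial coefficients and the inequality is between real numbers. -/
/-- Lemma 12 (`lem:msh:workperpeer`): if `s ≥ c (m/n) ln n`, then the
probability `C(m-s, n) / C(m, n)` that a fixed block of `s` consecutive data
items contains none of `n` uniformly random quantiles is at most `n^(-c)`. -/
theorem stmt_12 (m n s : ℕ) (hn : 2 ≤ n) (hns : n + s ≤ m)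
    (c : ℝ) (hc : 1 ≤ c)
    (hs : (s : ℝ) ≥ c * ((m : ℝ) / n) * Real.log n) :
    ((m - s).choose n : ℝ) / (m.choose n : ℝ) ≤ (n : ℝ) ^ (-c) := by
  have hm : 0 < m := by omega
  have hnm : n ≤ m - s := by omega
  have hsm : s ≤ m := by omega
  have hm0 : (0 : ℝ) < m := by exact_mod_cast hm
  have hn0 : (0 : ℝ) < n := by positivity
  -- key natural-number inequality
  have key : (m - s).descFactorial n * m ^ n ≤ m.descFactorial n * (m - s) ^ n := by
    have pw : ∀ i ∈ Finset.range n, (m - s - i) * m ≤ (m - i) * (m - s) := by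
      intro i hi
      have hi' : i < n := Finset.mem_range.mp hi
      have h1 : i ≤ m - s := by omega
      have h2 : i ≤ m := by omega
      zify [h1, h2, hsm]
      nlinarith [mul_nonneg (Int.natCast_nonneg i) (Int.natCast_nonneg s)]
    have := Finset.prod_le_prod' pw
    simpa [Nat.descFactorial_eq_prod_range, Finset.prod_mul_distrib] using this
  have hdf : 0 < m.descFactorial n := by rw [Nat.descFactorial_eq_factorial_mul_choose]; exact Nat.mul_pos n.factorial_pos (Nat.choose_pos (by omega))
  have hdfR : (0 : ℝ) < (m.descFactorial n : ℝ) := by exact_mod_cast hdf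
  have hch : 0 < m.choose n := Nat.choose_pos (by omega)
  have hchR : (0 : ℝ) < (m.choose n : ℝ) := by exact_mod_cast hch
  -- ratio of chooses equals ratio of descFactorials
  have hratio : ((m - s).choose n : ℝ) / (m.choose n : ℝ)
      = ((m - s).descFactorial n : ℝ) / (m.descFactorial n : ℝ) := by
    rw [Nat.descFactorial_eq_factorial_mul_choose, Nat.descFactorial_eq_factorial_mul_choose]
    push_cast
    rw [mul_div_mul_left]
    positivity
  have hpow : (0 : ℝ) < (m : ℝ) ^ n := by positivity
  have step1 : ((m - s).descFactorial n : ℝ) / (m.descFactorial n : ℝ)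
      ≤ (((m - s : ℕ) : ℝ)) ^ n / (m : ℝ) ^ n := by
    rw [div_le_div_iff₀ hdfR hpow, mul_comm ((((m - s : ℕ) : ℝ)) ^ n) _]
    exact_mod_cast key
  have hcast : (((m - s : ℕ) : ℝ)) = (m : ℝ) - s := by
    exact Nat.cast_sub hsm
  have step2 : (((m - s : ℕ) : ℝ)) ^ n / (m : ℝ) ^ n = (1 - (s : ℝ) / m) ^ n := by
    rw [hcast, ← div_pow]
    congr 1
    field_simp
  have step3 : (1 - (s : ℝ) / m) ^ n ≤ Real.exp (-((s : ℝ) / m)) ^ n := by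
    apply pow_le_pow_left₀
    · have : (s : ℝ) / m ≤ 1 := by
        rw [div_le_one hm0]; exact_mod_cast hsm
      linarith
    · have := Real.add_one_le_exp (-((s : ℝ) / m))
      linarith
  have step4 : Real.exp (-((s : ℝ) / m)) ^ n = Real.exp (-((s : ℝ) * n / m)) := by
    rw [← Real.exp_nat_mul]
    ring_nf
  have hs2 : c * Real.log n * m ≤ (s : ℝ) * n := by
    have h' : c * Real.log n * m / n ≤ (s : ℝ) := by
      calc c * Real.log n * m / n = c * ((m : ℝ) / n) * Real.log n := by ring
        _ ≤ s := hs
    calc c * Real.log n * m = c * Real.log n * m / n * n := by field_simp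
      _ ≤ (s : ℝ) * n := by
          apply mul_le_mul_of_nonneg_right h' (le_of_lt hn0)
  have step5 : Real.exp (-((s : ℝ) * n / m)) ≤ Real.exp (-(c * Real.log n)) := by
    apply Real.exp_le_exp.mpr
    have : c * Real.log n ≤ (s : ℝ) * n / m := (le_div_iff₀ hm0).mpr hs2
    linarith
  have step6 : Real.exp (-(c * Real.log n)) = (n : ℝ) ^ (-c) := by
    rw [Real.rpow_def_of_pos hn0]
    ring_nf
  calc ((m - s).choose n : ℝ) / (m.choose n : ℝ)
      = ((m - s).descFactorial n : ℝ) / (m.descFactorial n : ℝ) := hratio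
    _ ≤ (((m - s : ℕ) : ℝ)) ^ n / (m : ℝ) ^ n := step1
    _ = (1 - (s : ℝ) / m) ^ n := step2
    _ ≤ Real.exp (-((s : ℝ) / m)) ^ n := step3
    _ = Real.exp (-((s : ℝ) * n / m)) := step4
    _ ≤ Real.exp (-(c * Real.log n)) := step5
    _ = (n : ℝ) ^ (-c) := step6
end

section
/- Let m, a, k, μ be natural numbers with m ≥ 1, k ≤ a ≤ m and k ≤ μ ≤ m, and let M be a fixed μ-element subset of an m-element set. Then the number of a-element subsets S of the m-element set with |S ∩ M| ≥ k is at most C(μ, k) · (a/m)^k · C(m, a), as a real-number inequality, where C(·,·) denotes binomial coefficients. -/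
lemma descFactorial_mul_pow_le (a m : ℕ) (ham : a ≤ m) :
    ∀ k, a.descFactorial k * m ^ k ≤ m.descFactorial k * a ^ k := by
  intro k
  induction k with
  | zero => simp
  | succ k ih =>
    rw [Nat.descFactorial_succ, Nat.descFactorial_succ, pow_succ, pow_succ]
    have h1 : (a - k) * m ≤ (m - k) * a := by
      rw [Nat.sub_mul, Nat.sub_mul, Nat.mul_comm m a]
      exact Nat.sub_le_sub_left (Nat.mul_le_mul_left k ham) _
    calc (a - k) * a.descFactorial k * (m ^ k * m)
        = (a - k) * m * (a.descFactorial k * m ^ k) := by ring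
      _ ≤ (m - k) * a * (m.descFactorial k * a ^ k) := Nat.mul_le_mul h1 ih
      _ = (m - k) * m.descFactorial k * (a ^ k * a) := by ring

lemma choose_mul_pow_le (a m k : ℕ) (ham : a ≤ m) :
    a.choose k * m ^ k ≤ m.choose k * a ^ k := by
  have h := descFactorial_mul_pow_le a m ham k
  rw [Nat.descFactorial_eq_factorial_mul_choose, Nat.descFactorial_eq_factorial_mul_choose,
    Nat.mul_assoc, Nat.mul_assoc] at h
  exact Nat.le_of_mul_le_mul_left h k.factorial_pos

/-- Key nat inequality: `C(m-k, a-k) * m^k ≤ C(m,a) * a^k`. -/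
lemma key_nat (m a k : ℕ) (hka : k ≤ a) (ham : a ≤ m) :
    (m - k).choose (a - k) * m ^ k ≤ m.choose a * a ^ k := by
  have hid := Nat.choose_mul (n := m) hka
  have h := choose_mul_pow_le a m k ham
  have hpos : 0 < m.choose k := Nat.choose_pos (hka.trans ham)
  have : m.choose k * ((m - k).choose (a - k) * m ^ k) ≤ m.choose k * (m.choose a * a ^ k) := by
    calc m.choose k * ((m - k).choose (a - k) * m ^ k)
        = m.choose a * a.choose k * m ^ k := by rw [← Nat.mul_assoc, ← hid]
      _ ≤ m.choose a * (m.choose k * a ^ k) := by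
          rw [Nat.mul_assoc]; exact Nat.mul_le_mul_left _ h
      _ = m.choose k * (m.choose a * a ^ k) := by ring
  exact Nat.le_of_mul_le_mul_left this hpos

/-- Counting bound: the number of such `S` is at most `C(μ,k) * C(m-k, a-k)`. -/
lemma count_le (m a k μ : ℕ) (M : Finset (Fin m)) (hM : M.card = μ) :
    (Finset.univ.filter
        (fun S : Finset (Fin m) => S.card = a ∧ k ≤ (S ∩ M).card)).card ≤
      μ.choose k * (m - k).choose (a - k) := by
  classical
  set 𝒜 := Finset.univ.filter
      (fun S : Finset (Fin m) => S.card = a ∧ k ≤ (S ∩ M).card) with h𝒜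
  have hsub : 𝒜 ⊆ (M.powersetCard k).biUnion
      (fun T => (Finset.univ.powersetCard a).filter (fun S => T ⊆ S)) := by
    intro S hS
    rw [h𝒜, Finset.mem_filter] at hS
    obtain ⟨-, hSa, hk⟩ := hS
    obtain ⟨T, hTsub, hTcard⟩ := Finset.exists_subset_card_eq hk
    refine Finset.mem_biUnion.2 ⟨T, ?_, ?_⟩
    · exact Finset.mem_powersetCard.2 ⟨hTsub.trans (Finset.inter_subset_right), hTcard⟩
    · exact Finset.mem_filter.2 ⟨Finset.mem_powersetCard.2 ⟨Finset.subset_univ _, hSa⟩,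
        hTsub.trans Finset.inter_subset_left⟩
  refine (Finset.card_le_card hsub).trans ?_
  refine (Finset.card_biUnion_le).trans ?_
  have hcard : ∀ T ∈ M.powersetCard k,
      ((Finset.univ.powersetCard a).filter (fun S => T ⊆ S)).card ≤
        (m - k).choose (a - k) := by
    intro T hT
    obtain ⟨hTM, hTk⟩ := Finset.mem_powersetCard.1 hT
    have : ((Finset.univ.powersetCard a).filter (fun S => T ⊆ S)).card ≤
        ((Finset.univ \ T).powersetCard (a - k)).card := by
      apply Finset.card_le_card_of_injOn (fun S => S \ T)
      · intro S hS
        rw [Finset.mem_coe, Finset.mem_filter, Finset.mem_powersetCard] at hS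
        obtain ⟨⟨-, hSa⟩, hTS⟩ := hS
        refine Finset.mem_powersetCard.2 ⟨Finset.sdiff_subset_sdiff (Finset.subset_univ _)
          le_rfl, ?_⟩
        rw [Finset.card_sdiff_of_subset hTS, hSa, hTk]
      · intro S₁ h₁ S₂ h₂ he
        rw [Finset.coe_filter, Set.mem_setOf_eq] at h₁ h₂
        have e1 : S₁ = S₁ \ T ∪ T := by
          rw [Finset.sdiff_union_self_eq_union, Finset.union_eq_left.2 h₁.2]
        have e2 : S₂ = S₂ \ T ∪ T := by
          rw [Finset.sdiff_union_self_eq_union, Finset.union_eq_left.2 h₂.2]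
        rw [e1, e2]; exact congrArg (· ∪ T) he
    refine this.trans ?_
    rw [Finset.card_powersetCard, Finset.card_sdiff_of_subset (Finset.subset_univ _),
      Finset.card_univ, Fintype.card_fin, hTk]
  calc ∑ T ∈ M.powersetCard k,
        ((Finset.univ.powersetCard a).filter (fun S => T ⊆ S)).card
      ≤ ∑ T ∈ M.powersetCard k, (m - k).choose (a - k) := Finset.sum_le_sum hcard
    _ = μ.choose k * (m - k).choose (a - k) := by
        rw [Finset.sum_const, smul_eq_mul, Finset.card_powersetCard, hM]

/-- Hypergeometric tail bound from the proof of Lemma 13 (`lem:mergework`):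
for a fixed `μ`-element subset `M` of an `m`-element set, the number of
`a`-element subsets `S` with `|S ∩ M| ≥ k` is at most
`C(μ, k) · (a/m)^k · C(m, a)`. -/
theorem stmt_13 (m a k μ : ℕ) (hm : 1 ≤ m) (hka : k ≤ a) (ham : a ≤ m)
    (hkμ : k ≤ μ) (hμm : μ ≤ m)
    (M : Finset (Fin m)) (hM : M.card = μ) :
    ((Finset.univ.filter
        (fun S : Finset (Fin m) => S.card = a ∧ k ≤ (S ∩ M).card)).card : ℝ) ≤
      (μ.choose k : ℝ) * ((a : ℝ) / m) ^ k * (m.choose a : ℝ) := by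
  have h1 := count_le m a k μ M hM
  have h2 := key_nat m a k hka ham
  have hm0 : (0:ℝ) < (m:ℝ) := by exact_mod_cast hm
  have hC : ((m - k).choose (a - k) : ℝ) ≤ ((a : ℝ) / m) ^ k * (m.choose a : ℝ) := by
    rw [div_pow, div_mul_eq_mul_div, le_div_iff₀ (by positivity)]
    exact_mod_cast h2.trans_eq (Nat.mul_comm _ _)
  calc ((Finset.univ.filter
        (fun S : Finset (Fin m) => S.card = a ∧ k ≤ (S ∩ M).card)).card : ℝ)
      ≤ (μ.choose k : ℝ) * ((m - k).choose (a - k) : ℝ) := by exact_mod_cast h1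
    _ ≤ (μ.choose k : ℝ) * (((a : ℝ) / m) ^ k * (m.choose a : ℝ)) := by
        exact mul_le_mul_of_nonneg_left hC (by positivity)
    _ = (μ.choose k : ℝ) * ((a : ℝ) / m) ^ k * (m.choose a : ℝ) := by ring
end

section
/- Let n, s, c, k be real numbers with n > 1, s > 0, c > 0, and k ≥ n/((s/2)·e^{s/2−2}) + c·ln n. Then (2·e·n/(s·k))^k · e^{−k·s/2} ≤ n^{−c}. -/
/-- Final inequality in the proof of Lemma 14 (`lem:msm:work_distribution_bound`):
for `k ≥ n/((s/2) e^{s/2-2}) + c ln n`,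
`(2en/(sk))^k · e^{-ks/2} ≤ n^{-c}`. -/
theorem stmt_14 (n s c k : ℝ) (hn : 1 < n) (hs : 0 < s) (hc : 0 < c)
    (hk : k ≥ n / ((s / 2) * Real.exp (s / 2 - 2)) + c * Real.log n) :
    (2 * Real.exp 1 * n / (s * k)) ^ k * Real.exp (-(k * s / 2)) ≤
      n ^ (-c) := by
  have hn0 : (0:ℝ) < n := by linarith
  have hlog : 0 < Real.log n := Real.log_pos hn
  set A : ℝ := n / ((s / 2) * Real.exp (s / 2 - 2)) with hA
  have hApos : 0 < A := div_pos hn0 (by positivity)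
  have hk0 : 0 < k := lt_of_lt_of_le (by positivity) hk
  have he : Real.exp (s/2-1) = Real.exp 1 * Real.exp (s/2-2) := by
    rw [← Real.exp_add]; ring_nf
  have hbase : 2 * Real.exp 1 * n / (s * k) = A * Real.exp (s/2-1) / k := by
    rw [hA, he]
    have h1 : Real.exp (s/2-2) ≠ 0 := (Real.exp_pos _).ne'
    field_simp
  have hbpos : 0 < A * Real.exp (s/2-1) / k := by positivity
  rw [hbase, Real.rpow_def_of_pos hbpos, Real.rpow_def_of_pos hn0, ← Real.exp_add,
    Real.exp_le_exp]
  have hlogb : Real.log (A * Real.exp (s/2-1) / k)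
      = Real.log A + (s/2-1) - Real.log k := by
    rw [Real.log_div (by positivity) hk0.ne', Real.log_mul hApos.ne' (Real.exp_pos _).ne',
      Real.log_exp]
  rw [hlogb]
  have hlt : Real.log A - Real.log k ≤ A/k - 1 := by
    rw [← Real.log_div hApos.ne' hk0.ne']
    exact Real.log_le_sub_one_of_pos (div_pos hApos hk0)
  have h1 : k * ((Real.log A - Real.log k) - 1) ≤ k * (A/k - 2) :=
    mul_le_mul_of_nonneg_left (by linarith) hk0.le
  have h2 : k * (A/k - 2) = A - 2*k := by field_simp
  have key : k * ((Real.log A - Real.log k) - 1) ≤ -(c * Real.log n) := by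
    nlinarith [mul_pos hc hlog]
  nlinarith [key]
end

section
/- For a natural number L, define the bit-reversal map r : ℕ → ℕ by r(x) = Σ_{t=0}^{L−1} (if Nat.testBit x t then 2^{L−1−t} else 0). Then for all natural numbers i, j with i < L and (2j+1)·2^i < 2^L: r((2j+1)·2^i) = r(2j·2^i) + 2^{L−1−i}. -/
/-- The bit-reversal map on `L`-bit numbers: `x` with binary digits
`b_0 b_1 … b_{L-1}` (least significant first) is mapped to
`∑_{t<L} b_t · 2^{L-1-t}`. -/
def bitRev (L x : ℕ) : ℕ :=
  ∑ t ∈ Finset.range L, if Nat.testBit x t then 2 ^ (L - 1 - t) else 0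

/-- Property of the bit-reversal permutation used in supervised mergesort:
`r((2j+1)·2^i) = r(2j·2^i) + 2^{L-1-i}` for `i < L` and `(2j+1)·2^i < 2^L`. -/
theorem stmt_15 (L i j : ℕ) (hi : i < L) (hj : (2 * j + 1) * 2 ^ i < 2 ^ L) :
    bitRev L ((2 * j + 1) * 2 ^ i) =
      bitRev L (2 * j * 2 ^ i) + 2 ^ (L - 1 - i) := by
  have key : ∀ t, t ≠ i →
      Nat.testBit ((2 * j + 1) * 2 ^ i) t = Nat.testBit (2 * j * 2 ^ i) t := by
    intro t ht
    rw [mul_comm _ (2 ^ i), mul_comm _ (2 ^ i),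
      Nat.testBit_two_pow_mul, Nat.testBit_two_pow_mul]
    rcases lt_or_ge t i with h | h
    · simp [Nat.not_le_of_lt h]
    · have : i < t := lt_of_le_of_ne h (Ne.symm ht)
      obtain ⟨s, hs⟩ := Nat.exists_eq_add_of_lt this
      have : t - i = s + 1 := by omega
      rw [this, Nat.testBit_add_one, Nat.testBit_add_one]
      have e1 : (2 * j + 1) / 2 = j := by omega
      have e2 : (2 * j) / 2 = j := by omega
      rw [e1, e2]
  have hii : i ∈ Finset.range L := Finset.mem_range.mpr hi
  unfold bitRev
  rw [← Finset.add_sum_erase _ _ hii, ← Finset.add_sum_erase _ _ hii]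
  have h1 : Nat.testBit ((2 * j + 1) * 2 ^ i) i = true := by
    rw [mul_comm _ (2 ^ i), Nat.testBit_two_pow_mul]
    simp [Nat.add_mul_mod_self_left]
  have h2 : Nat.testBit (2 * j * 2 ^ i) i = false := by
    rw [mul_comm _ (2 ^ i), Nat.testBit_two_pow_mul]
    simp [Nat.mul_mod_right]
  rw [h1, h2,
    Finset.sum_congr rfl (fun t htm => by
      rw [key t (Finset.ne_of_mem_erase htm)])]
  simp [add_comm]
end
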